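/- arXiv:1707.08735 — 2 statements merged into one kernel-verified Lean document; each statement's English description precedes it below -/
import Mathlib

section
/- For every propositional formula φ (a GLAL formula built from atoms, negation and conjunction only, containing no C_A operators and no announcement operators) and every coalition A ⊆ Ag, the formula [φ]⁺_A C_A φ is valid: after globally and truthfully announcing φ to the agents in A, φ is common knowledge among the agents in A. -/
/-- Formulas of GLAL: atoms, negation, conjunction, common knowledge `C_A`,
global announcement `[φ]⁺_A ψ` (`annP`) and local announcement `[φ]⁻_A ψ` (`annM`). -/
inductive Form (AP Ag : Type) : Type
  | atom : AP → Form AP Ag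
  | neg  : Form AP Ag → Form AP Ag
  | and  : Form AP Ag → Form AP Ag → Form AP Ag
  | ck   : Set Ag → Form AP Ag → Form AP Ag
  | annP : Form AP Ag → Set Ag → Form AP Ag → Form AP Ag
  | annM : Form AP Ag → Set Ag → Form AP Ag → Form AP Ag

/-- A Kripke model over worlds `W`: a relation for each agent and a valuation.
(The requirement that each relation is an equivalence relation is stated
separately, as a hypothesis, where needed.) -/
structure KModel (AP Ag W : Type) where
  R : Ag → W → W → Prop
  V : AP → Set W

variable {AP Ag : Type}

/-- `R^C_A`: the reflexive-transitive closure of the union of the relations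
of the agents in `A`. -/
def ckRel {W : Type} (M : KModel AP Ag W) (A : Set Ag) : W → W → Prop :=
  Relation.ReflTransGen (fun v u => ∃ a ∈ A, M.R a v u)

/-- The local refinement `M⁻_(w,X,A)` of `M` w.r.t. world `w`, a set `X` of worlds
(the satisfaction set of the announced formula) and coalition `A`:
for `a ∉ A` the relation is unchanged; for `a ∈ A`, if `v ∈ R_a(w)` then the
equivalence class of `v` is split according to membership in `X`. -/
def KModel.refM {W : Type} (M : KModel AP Ag W) (w : W) (X : Set W) (A : Set Ag) :
    KModel AP Ag W where
  R a v u := M.R a v u ∧ (a ∈ A → M.R a w v → (v ∈ X ↔ u ∈ X))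
  V := M.V

/-- The global refinement `M⁺_(w,X,A)`: as the local one, but with test set
`R^C_A(w)` instead of `R_a(w)`. -/
def KModel.refP {W : Type} (M : KModel AP Ag W) (w : W) (X : Set W) (A : Set Ag) :
    KModel AP Ag W where
  R a v u := M.R a v u ∧ (a ∈ A → ckRel M A w v → (v ∈ X ↔ u ∈ X))
  V := M.V

/-- GLAL satisfaction `(M,w) ⊨ φ`. -/
def sat {W : Type} : Form AP Ag → KModel AP Ag W → W → Prop
  | .atom p, M, w => w ∈ M.V p
  | .neg φ, M, w => ¬ sat φ M w
  | .and φ ψ, M, w => sat φ M w ∧ sat ψ M w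
  | .ck A φ, M, w => ∀ v, ckRel M A w v → sat φ M v
  | .annM φ A ψ, M, w => sat φ M w → sat ψ (M.refM w {v | sat φ M v} A) w
  | .annP φ A ψ, M, w => sat φ M w → sat ψ (M.refP w {v | sat φ M v} A) w

/-- Validity: truth at every world of every Kripke model (all of whose
relations are equivalence relations). -/
def Valid (φ : Form AP Ag) : Prop :=
  ∀ (W : Type) (M : KModel AP Ag W), (∀ a, Equivalence (M.R a)) → ∀ w : W, sat φ M w

/-- `φ → ψ` as the usual abbreviation `¬(φ ∧ ¬ψ)`. -/
def Form.impl (φ ψ : Form AP Ag) : Form AP Ag := .neg (.and φ (.neg ψ))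

/-- `φ ↔ ψ` as the usual abbreviation. -/
def Form.biimpl (φ ψ : Form AP Ag) : Form AP Ag := .and (φ.impl ψ) (ψ.impl φ)

/-- Propositional formulas: built from atoms, negation and conjunction only. -/
def Form.isProp : Form AP Ag → Prop
  | .atom _ => True
  | .neg φ => φ.isProp
  | .and φ ψ => φ.isProp ∧ ψ.isProp
  | _ => False

theorem Form.isProp.sat_iff_of_V_eq {W : Type} {φ : Form AP Ag} (hφ : φ.isProp)
    {M M' : KModel AP Ag W} (hV : M.V = M'.V) (w : W) :
    sat φ M w ↔ sat φ M' w := by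
  induction φ generalizing w with
  | atom p => simp only [sat, hV]
  | neg ψ ih => exact not_congr (ih hφ w)
  | and ψ χ ih ih' => exact and_congr (ih hφ.1 w) (ih' hφ.2 w)
  | _ => exact hφ.elim

/-- Every `A`-step of the global refinement that starts in `R^C_A(w)` preserves membership
in `X`, so the refined common-knowledge relation cannot leave `X` once started inside it. -/
theorem ckRel_refP_mem {W : Type} {M : KModel AP Ag W} {w v : W} {X : Set W} {A : Set Ag}
    (hw : w ∈ X) (hv : ckRel (M.refP w X A) A w v) : v ∈ X ∧ ckRel M A w v := by
  induction hv with
  | refl => exact ⟨hw, .refl⟩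
  | tail _ hstep ih =>
    obtain ⟨a, ha, hR, hsplit⟩ := hstep
    exact ⟨(hsplit ha ih.2).mp ih.1, ih.2.tail ⟨a, ha, hR⟩⟩

theorem global_announcement_common_knowledge_general
    (φ : Form AP Ag) (hφ : φ.isProp) (A : Set Ag) :
    Valid (Form.annP φ A (Form.ck A φ)) := by
  intro W M _ w hw v hv
  have hv_mem : v ∈ {v | sat φ M v} := (ckRel_refP_mem hw hv).1
  exact (hφ.sat_iff_of_V_eq (M := M) (M' := M.refP w {v | sat φ M v} A) rfl v).mp hv_mem

/-- for propositional `φ`, the formula `[φ]⁺_A C_A φ` is valid. -/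
theorem global_announcement_common_knowledge [Fintype Ag]
    (φ : Form AP Ag) (hφ : φ.isProp) (A : Set Ag) :
    Valid (Form.annP φ A (Form.ck A φ)) :=
  global_announcement_common_knowledge_general φ hφ A
end

section
/- If pointed Kripke models (M,s) and (M',s') are ±-bisimilar, then for every GLAL formula θ and every coalition A ⊆ Ag, the refined pointed models (M⁻_(s,θ,A), s) and (M'⁻_(s',θ,A), s') are ±-bisimilar, and likewise (M⁺_(s,θ,A), s) and (M'⁺_(s',θ,A), s') are ±-bisimilar. -/
variable {AP Ag : Type}

/-- `R_A(w,v)`: `R_a(w,v)` holds for exactly the agents `a ∈ A`. -/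
def RA {W : Type} (M : KModel AP Ag W) (A : Set Ag) (w v : W) : Prop :=
  ∀ a : Ag, M.R a w v ↔ a ∈ A

/-- A ±-simulation between two Kripke models: Atoms, Forth and Reach. -/
def IsPMSim {W W' : Type} (M : KModel AP Ag W) (M' : KModel AP Ag W')
    (S : W → W' → Prop) : Prop :=
  ∀ w w', S w w' →
    (∀ p, w ∈ M.V p ↔ w' ∈ M'.V p) ∧
    (∀ (A : Set Ag) (v : W), RA M A w v → ∃ v', RA M' A w' v' ∧ S v v') ∧
    (∀ v v', S v v' → ∀ a, M.R a w v ↔ M'.R a w' v')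

/-- A ±-bisimulation: both it and its converse are ±-simulations. -/
def IsPMBisim {W W' : Type} (M : KModel AP Ag W) (M' : KModel AP Ag W')
    (B : W → W' → Prop) : Prop :=
  IsPMSim M M' B ∧ IsPMSim M' M (fun w' w => B w w')

/-!
The bisimulation `B` relating `s` and `s'` is itself a ±-bisimulation between the refined
models. Given Reach, Forth only says that every world has a partner, and Atoms, Reach and this
totality survive the refinement as soon as the two models agree, along `B`, on the announced set
and on the test deciding which classes are split. Agreement on the test is Reach for the local
refinement and the transfer of `R^C_A`-paths along `B` for the global one. Agreement on the set
`⟦θ⟧` is invariance of GLAL truth under ±-bisimulation, proved by induction on `θ`, where the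
announcement cases use the same refinement argument.
-/

/-- `refM w X A` and `refP w X A` are, definitionally, the cases `T a v = R_a(w,v)` and
`T a v = R^C_A(w,v)`. -/
def KModel.refine {W : Type} (M : KModel AP Ag W) (A : Set Ag) (T : Ag → W → Prop)
    (X : Set W) : KModel AP Ag W where
  R a v u := M.R a v u ∧ (a ∈ A → T a v → (v ∈ X ↔ u ∈ X))
  V := M.V

section Bisimulation

variable {W W' : Type} {M : KModel AP Ag W} {M' : KModel AP Ag W'}

theorem KModel.refine_refl {A : Set Ag} {T : Ag → W → Prop} {X : Set W}
    (hM : ∀ a w, M.R a w w) (a : Ag) (w : W) : (M.refine A T X).R a w w :=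
  ⟨hM a w, fun _ _ => Iff.rfl⟩

theorem isPMSim_iff {S : W → W' → Prop} :
    IsPMSim M M' S ↔ ∀ w w', S w w' →
      (∀ p, w ∈ M.V p ↔ w' ∈ M'.V p) ∧ (∀ v, ∃ v', S v v') ∧
        (∀ v v', S v v' → ∀ a, M.R a w v ↔ M'.R a w' v') := by
  refine forall₂_congr fun w w' => imp_congr_right fun hww => and_congr_right fun _ => ?_
  constructor
  · rintro ⟨forth, reach⟩
    refine ⟨fun v => ?_, reach⟩
    obtain ⟨v', -, hvv'⟩ := forth {a | M.R a w v} v fun a => Iff.rfl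
    exact ⟨v', hvv'⟩
  · rintro ⟨total, reach⟩
    refine ⟨fun A v hv => ?_, reach⟩
    obtain ⟨v', hvv'⟩ := total v
    exact ⟨v', fun a => (reach v v' hvv' a).symm.trans (hv a), hvv'⟩

theorem IsPMSim.exists_ckRel {S : W → W' → Prop} (hS : IsPMSim M M' S) {A : Set Ag}
    {s w : W} {s' : W'} (hss' : S s s') (h : ckRel M A s w) :
    ∃ w', ckRel M' A s' w' ∧ S w w' := by
  induction h with
  | refl => exact ⟨s', .refl, hss'⟩
  | tail _ hstep ih =>
    obtain ⟨x', hx', hxx'⟩ := ih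
    obtain ⟨-, total, reach⟩ := isPMSim_iff.mp hS _ _ hxx'
    obtain ⟨a, ha, hR⟩ := hstep
    obtain ⟨u', huu'⟩ := total _
    exact ⟨u', hx'.tail ⟨a, ha, (reach _ u' huu' a).mp hR⟩, huu'⟩

theorem IsPMSim.refine {S : W → W' → Prop} (hS : IsPMSim M M' S) {A : Set Ag}
    {T : Ag → W → Prop} {T' : Ag → W' → Prop} {X : Set W} {X' : Set W'}
    (hT : ∀ a ∈ A, ∀ v v', S v v' → (T a v ↔ T' a v'))
    (hX : ∀ v v', S v v' → (v ∈ X ↔ v' ∈ X')) :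
    IsPMSim (M.refine A T X) (M'.refine A T' X') S := by
  rw [isPMSim_iff] at hS ⊢
  intro w w' hww'
  obtain ⟨atoms, total, reach⟩ := hS w w' hww'
  exact ⟨atoms, total, fun v v' hvv' a => and_congr (reach v v' hvv' a) <|
    imp_congr_right fun ha =>
      imp_congr (hT a ha w w' hww') (iff_congr (hX w w' hww') (hX v v' hvv'))⟩

variable {B : W → W' → Prop}

theorem IsPMBisim.symm (hB : IsPMBisim M M' B) : IsPMBisim M' M (fun w' w => B w w') :=
  ⟨hB.2, hB.1⟩

theorem IsPMBisim.refine (hB : IsPMBisim M M' B) {A : Set Ag}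
    {T : Ag → W → Prop} {T' : Ag → W' → Prop} {X : Set W} {X' : Set W'}
    (hT : ∀ a ∈ A, ∀ v v', B v v' → (T a v ↔ T' a v'))
    (hX : ∀ v v', B v v' → (v ∈ X ↔ v' ∈ X')) :
    IsPMBisim (M.refine A T X) (M'.refine A T' X') B :=
  ⟨hB.1.refine hT hX,
    hB.2.refine (fun a ha v' v hvv' => (hT a ha v v' hvv').symm)
      (fun v' v hvv' => (hX v v' hvv').symm)⟩

theorem IsPMBisim.refM (hB : IsPMBisim M M' B) {s : W} {s' : W'} (hss' : B s s')
    (A : Set Ag) {X : Set W} {X' : Set W'} (hX : ∀ v v', B v v' → (v ∈ X ↔ v' ∈ X')) :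
    IsPMBisim (M.refM s X A) (M'.refM s' X' A) B :=
  hB.refine (fun a _ v v' hvv' => (hB.1 s s' hss').2.2 v v' hvv' a) hX

-- Reflexivity lets `w'` and any other partner `w''` of `w` be linked by a single `R_a`-step.
theorem IsPMBisim.ckRel_iff (hB : IsPMBisim M M' B) (hM : ∀ a w, M.R a w w)
    (hM' : ∀ a w', M'.R a w' w') {A : Set Ag} {a : Ag} (ha : a ∈ A)
    {s w : W} {s' w' : W'} (hss' : B s s') (hww' : B w w') :
    ckRel M A s w ↔ ckRel M' A s' w' := by
  constructor
  · intro h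
    obtain ⟨w'', hw'', hww''⟩ := hB.1.exists_ckRel hss' h
    exact hw''.tail ⟨a, ha, ((hB.1 w w'' hww'').2.2 w w' hww' a).mp (hM a w)⟩
  · intro h
    obtain ⟨w₂, hw₂, hw₂w'⟩ := hB.2.exists_ckRel hss' h
    exact hw₂.tail ⟨a, ha, ((hB.2 w' w₂ hw₂w').2.2 w' w hww' a).mp (hM' a w')⟩

theorem IsPMBisim.refP (hB : IsPMBisim M M' B) (hM : ∀ a w, M.R a w w)
    (hM' : ∀ a w', M'.R a w' w') {s : W} {s' : W'} (hss' : B s s') (A : Set Ag)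
    {X : Set W} {X' : Set W'} (hX : ∀ v v', B v v' → (v ∈ X ↔ v' ∈ X')) :
    IsPMBisim (M.refP s X A) (M'.refP s' X' A) B :=
  hB.refine (fun _ ha _ _ hvv' => hB.ckRel_iff hM hM' ha hss' hvv') hX

end Bisimulation

theorem IsPMBisim.sat_iff (θ : Form AP Ag) {W W' : Type} {M : KModel AP Ag W}
    {M' : KModel AP Ag W'} (hM : ∀ a w, M.R a w w) (hM' : ∀ a w', M'.R a w' w')
    {B : W → W' → Prop} (hB : IsPMBisim M M' B) {w : W} {w' : W'} (hww' : B w w') :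
    sat θ M w ↔ sat θ M' w' := by
  induction θ generalizing W W' M M' B w w' with
  | atom p => exact (hB.1 w w' hww').1 p
  | neg φ ih => exact not_congr (ih hM hM' hB hww')
  | and φ ψ ihφ ihψ => exact and_congr (ihφ hM hM' hB hww') (ihψ hM hM' hB hww')
  | ck A φ ih =>
    constructor
    · intro h v' hv'
      obtain ⟨v, hv, hvv'⟩ := hB.2.exists_ckRel hww' hv'
      exact (ih hM hM' hB hvv').mp (h v hv)
    · intro h v hv
      obtain ⟨v', hv', hvv'⟩ := hB.1.exists_ckRel hww' hv
      exact (ih hM hM' hB hvv').mpr (h v' hv')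
  | annP φ A ψ ihφ ihψ =>
    have hφ := fun v v' (hvv' : B v v') => ihφ hM hM' hB hvv'
    exact imp_congr (hφ w w' hww') <| ihψ (KModel.refine_refl hM) (KModel.refine_refl hM')
      (hB.refP hM hM' hww' A hφ) hww'
  | annM φ A ψ ihφ ihψ =>
    have hφ := fun v v' (hvv' : B v v') => ihφ hM hM' hB hvv'
    exact imp_congr (hφ w w' hww') <| ihψ (KModel.refine_refl hM) (KModel.refine_refl hM')
      (hB.refM hww' A hφ) hww'

theorem pm_bisim_preserved_by_refinement_general {W W' : Type}
    (M : KModel AP Ag W) (M' : KModel AP Ag W')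
    (hM : ∀ a : Ag, Equivalence (M.R a)) (hM' : ∀ a : Ag, Equivalence (M'.R a))
    (s : W) (s' : W') (h : ∃ B : W → W' → Prop, IsPMBisim M M' B ∧ B s s') :
    ∀ (θ : Form AP Ag) (A : Set Ag),
      (∃ B : W → W' → Prop,
        IsPMBisim (M.refM s {v | sat θ M v} A) (M'.refM s' {v | sat θ M' v} A) B ∧
          B s s') ∧
      (∃ B : W → W' → Prop,
        IsPMBisim (M.refP s {v | sat θ M v} A) (M'.refP s' {v | sat θ M' v} A) B ∧
          B s s') := by
  obtain ⟨B, hB, hss'⟩ := h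
  intro θ A
  have hrefl : ∀ a w, M.R a w w := fun a => (hM a).refl
  have hrefl' : ∀ a w', M'.R a w' w' := fun a => (hM' a).refl
  have hθ : ∀ v v', B v v' → (sat θ M v ↔ sat θ M' v') :=
    fun _ _ hvv' => hB.sat_iff θ hrefl hrefl' hvv'
  exact ⟨⟨B, hB.refM hss' A hθ, hss'⟩, ⟨B, hB.refP hrefl hrefl' hss' A hθ, hss'⟩⟩

/-- refinements of ±-bisimilar pointed models (by the same
formula and coalition) are again ±-bisimilar. -/
theorem pm_bisim_preserved_by_refinement {W W' : Type} [Fintype Ag]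
    (M : KModel AP Ag W) (M' : KModel AP Ag W')
    (hM : ∀ a : Ag, Equivalence (M.R a)) (hM' : ∀ a : Ag, Equivalence (M'.R a))
    (s : W) (s' : W') (h : ∃ B : W → W' → Prop, IsPMBisim M M' B ∧ B s s') :
    ∀ (θ : Form AP Ag) (A : Set Ag),
      (∃ B : W → W' → Prop,
        IsPMBisim (M.refM s {v | sat θ M v} A) (M'.refM s' {v | sat θ M' v} A) B ∧
          B s s') ∧
      (∃ B : W → W' → Prop,
        IsPMBisim (M.refP s {v | sat θ M v} A) (M'.refP s' {v | sat θ M' v} A) B ∧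
          B s s') :=
  pm_bisim_preserved_by_refinement_general M M' hM hM' s s' h
end
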